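/- Quadratic surrogate with remainder bound: let A be symmetric K×K with zero diagonal and ‖A‖₂ ≤ α < 1. Define Δ = log det(I + A) + ½‖A‖_F². Then |Δ| ≤ (α/(3(1-α)))·‖A‖_F². -/

import Mathlib

/-!
Diagonalising `A`, `log det (1 + A) = ∑ᵢ log (1 + λᵢ)`, `∑ᵢ λᵢ = tr A = 0` and
`∑ᵢ λᵢ² = tr (A²) = ‖A‖_F²`, so `Δ = ∑ᵢ (log (1 + λᵢ) - λᵢ + λᵢ² / 2)`. Each summand is the tail
`∑_{t ≥ 3} (-1)^(t+1) λᵢ^t / t` of the logarithm series, which is bounded termwise by the geometric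
series `|λᵢ|³ / (3 (1 - |λᵢ|)) ≤ α λᵢ² / (3 (1 - α))`.
-/

open Matrix Finset

theorem Real.abs_log_one_add_sub_add_sq_div_two_le {x : ℝ} (hx : |x| < 1) :
    |Real.log (1 + x) - x + x ^ 2 / 2| ≤ |x| ^ 3 / (3 * (1 - |x|)) := by
  have htail := (hasSum_nat_add_iff' 2).mpr
    (Real.hasSum_pow_div_log_of_abs_lt_one (x := -x) (by rwa [abs_neg]))
  have hhead : -Real.log (1 - -x) - ∑ i ∈ range 2, (-x) ^ (i + 1) / (i + 1) =
      -(Real.log (1 + x) - x + x ^ 2 / 2) := by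
    simp only [sum_range_succ, range_one, sum_singleton, sub_neg_eq_add, Nat.cast_zero,
      Nat.cast_one]
    ring
  rw [hhead] at htail
  have hgeom := ((hasSum_geometric_of_lt_one (abs_nonneg x) hx).mul_left (|x| ^ 3)).div_const 3
  have hbound := htail.norm_le_of_bounded hgeom fun n => by
    rw [Real.norm_eq_abs, abs_div, abs_pow, abs_neg,
      abs_of_pos (Nat.cast_add_one_pos (n + 2) : (0 : ℝ) < _), ← pow_add, add_comm 3]
    refine div_le_div_of_nonneg_left (by positivity) (by norm_num) ?_
    push_cast
    linarith [n.cast_nonneg (α := ℝ)]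
  rw [Real.norm_eq_abs, abs_neg] at hbound
  exact hbound.trans_eq (by field_simp)

theorem Real.abs_log_one_add_sub_add_sq_div_two_le_of_abs_le {x a : ℝ} (hx : |x| ≤ a)
    (ha : a < 1) : |Real.log (1 + x) - x + x ^ 2 / 2| ≤ a / (3 * (1 - a)) * x ^ 2 := by
  have hcube : |x| ^ 3 ≤ a * x ^ 2 := by
    rw [pow_succ', sq_abs]
    exact mul_le_mul_of_nonneg_right hx (sq_nonneg x)
  calc |Real.log (1 + x) - x + x ^ 2 / 2| ≤ |x| ^ 3 / (3 * (1 - |x|)) :=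
        Real.abs_log_one_add_sub_add_sq_div_two_le (hx.trans_lt ha)
    _ ≤ a * x ^ 2 / (3 * (1 - a)) :=
        div_le_div₀ (mul_nonneg ((abs_nonneg x).trans hx) (sq_nonneg x)) hcube (by linarith)
          (by linarith)
    _ = a / (3 * (1 - a)) * x ^ 2 := by ring

theorem Matrix.IsSymm.sum_sum_sq_eq_trace_mul_self {n R : Type*} [Fintype n] [CommSemiring R]
    {A : Matrix n n R} (hA : A.IsSymm) : ∑ i, ∑ j, A i j ^ 2 = (A * A).trace := by
  simp only [trace, Matrix.diag, mul_apply, sq]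
  exact sum_congr rfl fun i _ => sum_congr rfl fun j _ => by rw [hA.apply]

namespace Matrix.IsHermitian

variable {n 𝕜 : Type*} [Fintype n] [DecidableEq n] [RCLike 𝕜] {A : Matrix n n 𝕜}

theorem det_cfc (hA : A.IsHermitian) (f : ℝ → ℝ) :
    (cfc f A).det = ∏ i, (f (hA.eigenvalues i) : 𝕜) := by
  simp [hA.cfc_eq, IsHermitian.cfc, -Unitary.conjStarAlgAut_apply]

theorem trace_cfc (hA : A.IsHermitian) (f : ℝ → ℝ) :
    (cfc f A).trace = ∑ i, (f (hA.eigenvalues i) : 𝕜) := by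
  rw [hA.cfc_eq, IsHermitian.cfc, Unitary.conjStarAlgAut_apply, trace_mul_cycle,
    Unitary.coe_star_mul_self, one_mul, trace_diagonal]
  rfl

theorem det_one_add (hA : A.IsHermitian) :
    (1 + A).det = ∏ i, (1 + hA.eigenvalues i : 𝕜) := by
  have h : 1 + A = cfc (fun x : ℝ => 1 + x) A := by
    rw [cfc_add .., cfc_const_one .., cfc_id' ..]
  rw [h, hA.det_cfc]
  push_cast
  rfl

theorem trace_mul_self (hA : A.IsHermitian) :
    (A * A).trace = ∑ i, (hA.eigenvalues i : 𝕜) ^ 2 := by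
  have h : A * A = cfc (fun x : ℝ => x ^ 2) A := by
    rw [cfc_pow .., cfc_id' .., sq]
  rw [h, hA.trace_cfc]
  push_cast
  rfl

end Matrix.IsHermitian

theorem quadratic_surrogate_remainder {K : ℕ} (A : Matrix (Fin K) (Fin K) ℝ)
    (hA : A.IsHermitian) (hdiag : ∀ i, A i i = 0) (α : ℝ)
    (hbnd : ∀ i, |hA.eigenvalues i| ≤ α) (hα : α < 1) :
    |Real.log (1 + A).det + (1 / 2) * ∑ i, ∑ j, (A i j) ^ 2|
      ≤ (α / (3 * (1 - α))) * ∑ i, ∑ j, (A i j) ^ 2 := by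
  set μ := hA.eigenvalues
  have hsymm : A.IsSymm := by simpa [IsHermitian, IsSymm] using hA
  have hpos (i) : 0 < 1 + μ i := by linarith [(abs_le.mp (hbnd i)).1]
  have htrace : ∑ i, μ i = 0 := by
    simpa [trace, hdiag] using (hA.trace_eq_sum_eigenvalues).symm
  rw [hsymm.sum_sum_sq_eq_trace_mul_self, hA.trace_mul_self, hA.det_one_add]
  simp only [RCLike.ofReal_real_eq_id, id]
  rw [Real.log_prod fun i _ => (hpos i).ne']
  calc |∑ i, Real.log (1 + μ i) + 1 / 2 * ∑ i, μ i ^ 2|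
      = |∑ i, (Real.log (1 + μ i) - μ i + μ i ^ 2 / 2)| := by
        rw [sum_add_distrib, sum_sub_distrib, htrace, ← sum_div]
        ring_nf
    _ ≤ ∑ i, |Real.log (1 + μ i) - μ i + μ i ^ 2 / 2| := abs_sum_le_sum_abs _ _
    _ ≤ ∑ i, α / (3 * (1 - α)) * μ i ^ 2 := sum_le_sum fun i _ =>
        Real.abs_log_one_add_sub_add_sq_div_two_le_of_abs_le (hbnd i) hα
    _ = α / (3 * (1 - α)) * ∑ i, μ i ^ 2 := (mul_sum ..).symm
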